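/- Define the Narumi numbers of order a by (log(1+t)/t)^a = ∑_{l≥0} N_l^{(a)} t^l/l! (for a a positive integer). Then for every n ≥ 1 and every l ≥ 0, N_l^{(n)}/n = B_l^{(n+l)}/(n+l), where B_l^{(m)} is the l-th Bernoulli number of order m. -/

import Mathlib

open PowerSeries Nat

noncomputable section

/-- The exponential series `e^t ∈ ℚ[[t]]`. -/
def expS : PowerSeries ℚ := PowerSeries.exp ℚ

/-- `log(1+t) = ∑_{k≥1} (-1)^{k+1} t^k / k`. -/
def logS : PowerSeries ℚ := PowerSeries.mk fun k => if k = 0 then 0 else (-1 : ℚ)^(k+1) / k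

/-- `log(1+t)/t = ∑_{k≥0} (-1)^k t^k/(k+1)`. -/
def LtS : PowerSeries ℚ := PowerSeries.mk fun k => (-1 : ℚ)^k / (k+1)

/-- `(e^{bt} - 1)/t`. -/
def ebt (b : ℚ) : PowerSeries ℚ := PowerSeries.mk fun m => b^(m+1) / (m+1)!

/-- Falling factorial `(x)_m = x(x-1)⋯(x-m+1)`. -/
def ff (x : ℚ) (m : ℕ) : ℚ := ∏ i ∈ Finset.range m, (x - i)

/-- `(1+t)^x = ∑_m (x)_m t^m/m!`. -/
def onePlusPow (x : ℚ) : PowerSeries ℚ := PowerSeries.mk fun m => ff x m / m !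

/-- Integer powers of a power series (negative powers via `PowerSeries.inv`). -/
def zp (f : PowerSeries ℚ) : ℤ → PowerSeries ℚ
  | Int.ofNat n => f ^ n
  | Int.negSucc n => f⁻¹ ^ (n + 1)

/-- Stirling numbers of the second kind. -/
def S2 : ℕ → ℕ → ℕ
  | 0, 0 => 1
  | 0, _ + 1 => 0
  | _ + 1, 0 => 0
  | n + 1, k + 1 => (k + 1) * S2 n (k + 1) + S2 n k

/-- Signed Stirling numbers of the first kind: `(x)_n = ∑_l S1 n l • x^l`. -/
def S1 : ℕ → ℕ → ℤ
  | 0, 0 => 1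
  | 0, _ + 1 => 0
  | _ + 1, 0 => 0
  | n + 1, k + 1 => S1 n k - n * S1 n (k + 1)

/-- Bernoulli polynomial of (integer) order `a` evaluated at `x`:
`(t/(e^t-1))^a e^{xt} = ∑_m Bpol a x m • t^m/m!`. -/
def Bpol (a : ℤ) (x : ℚ) (m : ℕ) : ℚ :=
  m ! * PowerSeries.coeff m (zp (ebt 1)⁻¹ a * PowerSeries.rescale x expS)

/-- Bernoulli numbers of order `a`. -/
def Bnum (a : ℤ) (m : ℕ) : ℚ := Bpol a 0 m

/-- Narumi numbers: `(log(1+t)/t)^n = ∑_l Nnum n l • t^l/l!`. -/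
def Nnum (n l : ℕ) : ℚ := l ! * PowerSeries.coeff l (LtS ^ n)

/-- Narumi polynomials of (integer) order `a`:
`(log(1+t)/t)^a (1+t)^x = ∑_l Npol a x l • t^l/l!`. -/
def Npol (a : ℤ) (x : ℚ) (l : ℕ) : ℚ :=
  l ! * PowerSeries.coeff l (zp LtS a * onePlusPow x)

/-- Bernoulli polynomials of the second kind:
`t(1+t)^x/log(1+t) = ∑_m b2 x m • t^m/m!`. -/
def b2 (x : ℚ) (m : ℕ) : ℚ := m ! * PowerSeries.coeff m (onePlusPow x * LtS⁻¹)

/-- Poisson–Charlier polynomial `C_n(x;a)`. -/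
def PC (n : ℕ) (x a : ℚ) : ℚ :=
  ∑ k ∈ Finset.range (n + 1), (n.choose k : ℚ) * (-1)^(n - k) * (a⁻¹)^k * ff x k

/-- Generalized binomial coefficient `C(x, m) = (x)_m/m!`. -/
def gchoose (x : ℚ) (m : ℕ) : ℚ := ff x m / m !

/-- Action of a power series `f(t) = ∑ a_k t^k/k!` on a polynomial:
`f(t) p(x) = ∑_k a_k p^{(k)}(x)/k!` (a finite sum). -/
def act (f : PowerSeries ℚ) (p : Polynomial ℚ) : Polynomial ℚ :=
  ∑ k ∈ Finset.range (p.natDegree + 1),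
    PowerSeries.coeff k f • (⇑Polynomial.derivative)^[k] p

/-- `e^{xt} ∈ (ℚ[x])[[t]]`. -/
def expPoly : PowerSeries (Polynomial ℚ) :=
  PowerSeries.mk fun k => ((k ! : ℚ)⁻¹) • Polynomial.X ^ k

/-- The Sheffer polynomial sequence attached to an invertible series `f`:
`f(t) e^{xt} = ∑_n (polyOf f n) t^n/n!`. -/
def polyOf (f : PowerSeries ℚ) (n : ℕ) : Polynomial ℚ :=
  (n ! : ℚ) • PowerSeries.coeff n (PowerSeries.map Polynomial.C f * expPoly)

/-- `((1-λ)/(e^t-λ))^α`. -/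
def FEser (lam : ℚ) (α : ℕ) : PowerSeries ℚ :=
  (PowerSeries.C (R := ℚ) (1 - lam) * (expS - PowerSeries.C (R := ℚ) lam)⁻¹) ^ α

/-- Frobenius–Euler polynomials of order `α`. -/
def FE (lam : ℚ) (α n : ℕ) : Polynomial ℚ := polyOf (FEser lam α) n

/-- `(2/(e^t+1))^α`. -/
def Eser (α : ℕ) : PowerSeries ℚ := (PowerSeries.C (R := ℚ) 2 * (expS + 1)⁻¹) ^ α

/-- Euler polynomials of order `α`. -/
def Epol (α n : ℕ) : Polynomial ℚ := polyOf (Eser α) n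

/-- `((1-λ)/(e^{(λ-1)t}-λ))^α`. -/
def Aser (lam : ℚ) (α : ℕ) : PowerSeries ℚ :=
  (PowerSeries.C (R := ℚ) (1 - lam) *
    (PowerSeries.rescale (lam - 1) expS - PowerSeries.C (R := ℚ) lam)⁻¹) ^ α

/-- Frobenius-type Eulerian polynomials of order `α`. -/
def Apol (lam : ℚ) (α n : ℕ) : Polynomial ℚ := polyOf (Aser lam α) n

/-!
Both sides equal `l! (n - 1)! s(n + l, n) / (n + l)!`, where `s` are the signed Stirling numbers
of the first kind. Since `(1 + t) · d/dt log(1 + t) = 1`, the coefficients of `log(1 + t)^n` obey the Stirling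
recurrence, so `log(1 + t)^n / n! = ∑_k s(k, n) t^k / k!`. Since `g = t / (e^t - 1)` solves
`t g' = (1 - t) g - g²`, the coefficients of `g^m` obey a recurrence that identifies
`(n + l - 1)! [t^l] g^(n + l)` with `(n - 1)! s(n + l, n)`. Comparing the two gives the theorem, an
instance of Lagrange inversion for `log(1 + t)` and its inverse `e^t - 1`.
-/

open PowerSeries

theorem PowerSeries.coeff_X_mul_derivative {R : Type*} [CommSemiring R] (f : R⟦X⟧) (k : ℕ) :
    coeff k (X * d⁄dX R f) = k * coeff k f := by
  cases k with
  | zero => simp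
  | succ k => rw [coeff_succ_X_mul, coeff_derivative]; push_cast; ring

theorem S1_succ_succ (n k : ℕ) : S1 (n + 1) (k + 1) = S1 n k - n * S1 n (k + 1) := rfl

theorem S1_eq_zero_of_lt {n k : ℕ} (h : n < k) : S1 n k = 0 := by
  induction n generalizing k with
  | zero => obtain ⟨k, rfl⟩ := Nat.exists_eq_add_of_lt h; rfl
  | succ n ih =>
    obtain ⟨k, rfl⟩ := Nat.exists_eq_add_of_lt h
    rw [S1_succ_succ, ih (by omega), ih (by omega)]
    ring

theorem S1_self (n : ℕ) : S1 n n = 1 := by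
  induction n with
  | zero => rfl
  | succ n ih => simp [S1, ih, S1_eq_zero_of_lt (Nat.lt_succ_self n)]

theorem logS_eq_X_mul_LtS : logS = X * LtS := by
  ext (_ | k)
  · simp [logS, LtS]
  · simp [logS, LtS, coeff_succ_X_mul, pow_succ]

theorem one_add_X_mul_derivative_logS : (1 + X) * d⁄dX ℚ logS = 1 := by
  have h_derivative : d⁄dX ℚ logS = mk fun k => (-1 : ℚ) ^ k := by
    ext k
    simp only [coeff_derivative, logS, coeff_mk, Nat.succ_ne_zero, if_false]
    field_simp
    push_cast
    ring
  ext (_ | k)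
  · simp [h_derivative]
  · simp [h_derivative, add_mul, coeff_succ_X_mul, pow_succ, coeff_one]

theorem one_add_X_mul_derivative_logS_pow (n : ℕ) :
    (1 + X) * d⁄dX ℚ (logS ^ (n + 1)) = C ((n : ℚ) + 1) * logS ^ n := by
  rw [derivative_pow, Nat.add_sub_cancel, ← map_natCast (C (R := ℚ))]
  push_cast
  linear_combination C ((n : ℚ) + 1) * logS ^ n * one_add_X_mul_derivative_logS

theorem coeff_logS_pow_recurrence (n k : ℕ) :
    ((k : ℚ) + 1) * coeff (k + 1) (logS ^ (n + 1)) + k * coeff k (logS ^ (n + 1))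
      = ((n : ℚ) + 1) * coeff k (logS ^ n) := by
  have h := congrArg (coeff k) (one_add_X_mul_derivative_logS_pow n)
  rw [add_mul, one_mul, map_add, coeff_derivative, coeff_X_mul_derivative, coeff_C_mul] at h
  linear_combination h

theorem factorial_mul_coeff_logS_pow (n k : ℕ) :
    (k ! : ℚ) * coeff k (logS ^ n) = n ! * S1 k n := by
  induction n generalizing k with
  | zero => cases k <;> simp [coeff_one, S1]
  | succ n ihn =>
    induction k with
    | zero => simp [logS, S1]
    | succ k ihk =>
      rw [Nat.factorial_succ n] at ihk ⊢
      rw [S1_succ_succ, Nat.factorial_succ k]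
      push_cast at ihk ⊢
      linear_combination (k ! : ℚ) * coeff_logS_pow_recurrence n k - (k : ℚ) * ihk
        + ((n : ℚ) + 1) * ihn k

theorem constantCoeff_ebt_one : constantCoeff (ebt 1) = 1 := by
  simp [ebt]

theorem X_mul_derivative_ebt_one : X * d⁄dX ℚ (ebt 1) = 1 + (X - 1) * ebt 1 := by
  ext (_ | k)
  · simp [constantCoeff_ebt_one]
  · rw [coeff_X_mul_derivative, map_add, sub_mul, map_sub, coeff_succ_X_mul]
    simp only [ebt, coeff_mk, one_pow, coeff_one, Nat.succ_ne_zero, if_false, one_mul]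
    rw [Nat.factorial_succ (k + 1)]
    field_simp
    push_cast
    ring

theorem X_mul_derivative_inv_ebt_one :
    X * d⁄dX ℚ (ebt 1)⁻¹ = (1 - X) * (ebt 1)⁻¹ - (ebt 1)⁻¹ ^ 2 := by
  have h_inv : ebt 1 * (ebt 1)⁻¹ = 1 :=
    PowerSeries.mul_inv_cancel _ (by simp [constantCoeff_ebt_one])
  rw [derivative_inv']
  linear_combination -((ebt 1)⁻¹ ^ 2) * X_mul_derivative_ebt_one
    + (1 - X) * (ebt 1)⁻¹ * h_inv

theorem X_mul_derivative_inv_ebt_one_pow (m : ℕ) :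
    X * d⁄dX ℚ ((ebt 1)⁻¹ ^ (m + 1))
      = C ((m : ℚ) + 1) * ((1 - X) * (ebt 1)⁻¹ ^ (m + 1) - (ebt 1)⁻¹ ^ (m + 2)) := by
  rw [derivative_pow, Nat.add_sub_cancel, ← map_natCast (C (R := ℚ))]
  push_cast
  linear_combination C ((m : ℚ) + 1) * (ebt 1)⁻¹ ^ m * X_mul_derivative_inv_ebt_one

theorem coeff_inv_ebt_one_pow_recurrence (m k : ℕ) :
    ((m : ℚ) + 1) * coeff (k + 1) ((ebt 1)⁻¹ ^ (m + 2))
      = ((m : ℚ) - k) * coeff (k + 1) ((ebt 1)⁻¹ ^ (m + 1))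
        - ((m : ℚ) + 1) * coeff k ((ebt 1)⁻¹ ^ (m + 1)) := by
  have h := congrArg (coeff (k + 1)) (X_mul_derivative_inv_ebt_one_pow m)
  rw [coeff_X_mul_derivative, coeff_C_mul, sub_mul, one_mul, map_sub, map_sub,
    coeff_succ_X_mul] at h
  push_cast at h
  linear_combination h

theorem factorial_mul_coeff_inv_ebt_one_pow (j l : ℕ) :
    ((j + l)! : ℚ) * coeff l ((ebt 1)⁻¹ ^ (j + l + 1)) = j ! * S1 (j + l + 1) (j + 1) := by
  induction l generalizing j with
  | zero => simp [S1_self, constantCoeff_ebt_one]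
  | succ l ihl =>
    induction j with
    | zero =>
      have h_rec := coeff_inv_ebt_one_pow_recurrence l l
      have h_S1 : S1 (l + 2) 1 = -(l + 1) * S1 (l + 1) 1 := by
        rw [S1_succ_succ, show S1 (l + 1) 0 = 0 from rfl]
        push_cast
        ring
      have ihl₀ := ihl 0
      simp only [Nat.zero_add, Nat.factorial_zero, Nat.cast_one, one_mul] at ihl₀ ⊢
      rw [Nat.factorial_succ, h_S1]
      push_cast
      linear_combination (l ! : ℚ) * h_rec - (l + 1 : ℚ) * ihl₀
    | succ j ihj =>
      have h_rec := coeff_inv_ebt_one_pow_recurrence (j + l + 1) l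
      have ihl₁ := ihl (j + 1)
      simp only [show j + 1 + (l + 1) = j + l + 1 + 1 by omega,
        show j + (l + 1) = j + l + 1 by omega, show j + 1 + l = j + l + 1 by omega,
        show j + l + 1 + 2 = j + l + 1 + 1 + 1 by omega] at h_rec ihl₁ ihj ⊢
      rw [Nat.factorial_succ j] at ihl₁ ⊢
      rw [Nat.factorial_succ (j + l + 1), S1_succ_succ]
      push_cast at h_rec ihl₁ ⊢
      linear_combination ((j + l + 1)! : ℚ) * h_rec + ((j : ℚ) + 1) * ihj
        - ((j : ℚ) + l + 2) * ihl₁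

theorem Nnum_eq_coeff_logS_pow (n l : ℕ) : Nnum n l = l ! * coeff (n + l) (logS ^ n) := by
  rw [Nnum, logS_eq_X_mul_LtS, mul_pow, add_comm n l, coeff_X_pow_mul]

theorem Bnum_natCast (m l : ℕ) : Bnum m l = l ! * coeff l ((ebt 1)⁻¹ ^ m) := by
  show (l ! : ℚ) * coeff l ((ebt 1)⁻¹ ^ m * rescale 0 expS) = _
  simp [expS, constantCoeff_exp]

theorem stmt4 (n : ℕ) (hn : 1 ≤ n) (l : ℕ) :
    Nnum n l / n = Bnum ((n : ℤ) + l) l / ((n : ℚ) + l) := by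
  obtain ⟨j, rfl⟩ := Nat.exists_eq_add_of_le' hn
  have h_log := factorial_mul_coeff_logS_pow (j + 1) (j + l + 1)
  have h_bern := factorial_mul_coeff_inv_ebt_one_pow j l
  rw [Nnum_eq_coeff_logS_pow, Nat.add_right_comm,
    show ((j + 1 : ℕ) : ℤ) + l = ((j + l + 1 : ℕ) : ℤ) by push_cast; ring, Bnum_natCast,
    div_eq_div_iff (by positivity) (by positivity)]
  rw [Nat.factorial_succ (j + l), Nat.factorial_succ j] at h_log
  apply mul_left_cancel₀ (show ((j + l)! : ℚ) ≠ 0 by positivity)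
  push_cast at h_log ⊢
  linear_combination (l ! : ℚ) * h_log - (l ! : ℚ) * ((j : ℚ) + 1) * h_bern
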